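/- For every positive integer m and every integer s with m ≤ s ≤ 4m+1, s/√(4m+1) ∈ W_{m+2}(√(4m+1)). -/

import Mathlib

open scoped BigOperators

/-- `W r α` : the smallest set of nonneg reals containing `α` and closed under the
multiset rule from the paper. -/
inductive W (r : ℕ) (α : ℝ) : ℝ → Prop
  | base : W r α α
  | step (s : ℕ) (q : Fin s → ℝ) (β : ℝ)
      (hq : ∀ i, W r α (q i)) (hqpos : ∀ i, 0 < q i)
      (hβeq : β = α - ∑ i, (q i)⁻¹) (hβ0 : 0 ≤ β)
      (hs1 : 1 ≤ s) (hs : (s : ℤ) ≤ (r : ℤ) - ⌈β / (β + 1)⌉) : W r α β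

/-!
Write `N = 4m + 1`, `α = √N` and `K = N - s`, so that `s/α = α - K/α`; we put `s/α` in `W`
by downward induction on `s`. If `K ≤ m + 1`, remove `K` copies of `α⁻¹` from `α`. Otherwise
take `v = ⌈(m+1)(s+1)/K⌉` and split `vK = t₀ + ⋯ + tₘ` into integers with
`s < tᵢ ≤ v + m + 1`, possible since `(m+1)(s+1) ≤ vK ≤ (m+1)(v+m+1)`, the latter by
minimality of `v`. By induction `tᵢ/α ∈ W`, and removing `tᵢ - v` copies of its reciprocal
from `α` leaves `vα/tᵢ`. The reciprocals of these `m + 1` elements sum to `K/α`.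
-/

theorem Nat.exists_fin_sum_eq_of_mul_le_of_le_mul {a b w : ℕ} :
    ∀ {k : ℕ}, k * a ≤ w → w ≤ k * b →
      ∃ t : Fin k → ℕ, (∀ i, a ≤ t i ∧ t i ≤ b) ∧ ∑ i, t i = w
  | 0, _, hw => ⟨Fin.elim0, fun i => i.elim0, by simp_all⟩
  | k + 1, hwa, hwb => by
    -- the first entry takes as much as it can; the remainder stays feasible for `k` entries
    have hab : a ≤ b := le_of_mul_le_mul_left (hwa.trans hwb) k.succ_pos
    obtain ⟨t, ht, hsum⟩ := exists_fin_sum_eq_of_mul_le_of_le_mul (a := a) (b := b) (k := k)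
      (w := w - min b (w - k * a)) (by grind) (by grind [Nat.mul_le_mul_left k hab])
    refine ⟨Fin.cons (min b (w - k * a)) t, Fin.forall_fin_succ.2 ⟨?_, by simpa using ht⟩, ?_⟩
    · simp only [Fin.cons_zero]
      exact ⟨by grind, min_le_left _ _⟩
    · rw [Fin.sum_univ_succ]
      simp only [Fin.cons_zero, Fin.cons_succ, hsum]
      grind

theorem Int.ceil_div_add_one_le_one {β : ℝ} (hβ : 0 ≤ β) : ⌈β / (β + 1)⌉ ≤ 1 := by
  rw [Int.ceil_le, Int.cast_one, div_le_one (by linarith)]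
  linarith

namespace W

variable {r : ℕ} {α : ℝ}

theorem step_of_lt {k : ℕ} (hk : 1 ≤ k) (hkr : k < r) (q : Fin k → ℝ)
    (hq : ∀ i, W r α (q i)) (hqpos : ∀ i, 0 < q i) (hβ : 0 ≤ α - ∑ i, (q i)⁻¹) :
    W r α (α - ∑ i, (q i)⁻¹) :=
  step k q _ hq hqpos rfl hβ hk <| by
    have := Int.ceil_div_add_one_le_one hβ
    omega

theorem sub_nsmul_inv {k : ℕ} (hk : 1 ≤ k) (hkr : k < r) {x : ℝ} (hx : W r α x)
    (hxpos : 0 < x) (hβ : 0 ≤ α - k * x⁻¹) : W r α (α - k * x⁻¹) := by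
  have hsum : ∑ _ : Fin k, x⁻¹ = k * x⁻¹ := by simp
  rw [← hsum] at hβ ⊢
  exact step_of_lt hk hkr _ (fun _ => hx) (fun _ => hxpos) hβ

variable (hα : 0 < α)
include hα

theorem mul_div_of_div {t v : ℕ} (hvt : v < t) (htv : t - v < r) (h : W r α (t / α)) :
    W r α (v * α / t) := by
  have ht : (0 : ℝ) < t := by exact_mod_cast (Nat.zero_le v).trans_lt hvt
  have key : α - ((t - v : ℕ) : ℝ) * (t / α)⁻¹ = v * α / t := by
    rw [Nat.cast_sub hvt.le]
    field_simp
    ring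
  rw [← key]
  refine sub_nsmul_inv (by omega) htv h (by positivity) ?_
  rw [key]
  positivity

theorem sub_div_of_sum_eq {k v K : ℕ} (hk : 1 ≤ k) (hkr : k < r) (hv : 0 < v)
    (t : Fin k → ℕ) (ht : ∀ i, 0 < t i) (hsum : ∑ i, t i = v * K)
    (hW : ∀ i, W r α (v * α / t i)) (hK : K ≤ α ^ 2) : W r α (α - K / α) := by
  have hinv : ∑ i, ((v * α / t i : ℝ))⁻¹ = K / α := by
    simp_rw [inv_div, ← Finset.sum_div]
    rw [← Nat.cast_sum, hsum, Nat.cast_mul, mul_div_mul_left _ _ (by positivity)]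
  rw [← hinv]
  refine step_of_lt hk hkr _ hW (fun i => ?_) ?_
  · have := ht i
    positivity
  · rw [hinv, sub_nonneg, div_le_iff₀ hα]
    nlinarith

end W

theorem exists_fin_sum_eq_mul_of_lt_three_mul {m n K : ℕ} (hmn : m ≤ n) (hn : n < 3 * m)
    (hK : n + K = 4 * m + 1) :
    ∃ v : ℕ, ∃ t : Fin (m + 1) → ℕ,
      0 < v ∧ v ≤ n ∧ (∀ i, n < t i ∧ t i ≤ v + (m + 1)) ∧ ∑ i, t i = v * K := by
  have hm : 1 ≤ m := by omega
  obtain ⟨v, hAv, hvA⟩ : ∃ v, (m + 1) * (n + 1) ≤ K * v ∧ K * v < (m + 1) * (n + 1) + K :=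
    ⟨((m + 1) * (n + 1) + K - 1) / K, by
      have := Nat.div_add_mod ((m + 1) * (n + 1) + K - 1) K
      have := Nat.mod_lt ((m + 1) * (n + 1) + K - 1) (show 0 < K by omega)
      omega⟩
  have hv : 0 < v := Nat.pos_of_ne_zero (by rintro rfl; simp at hAv)
  have hvn : v ≤ n := by
    zify at *
    nlinarith
  have hvK : K * v ≤ (m + 1) * (v + (m + 1)) := by
    zify at *
    set d : ℤ := K - 2 * (m + 1)
    have hd : 0 ≤ d * (d - 1) := by
      rcases le_or_gt d 0 with h | h <;> nlinarith
    have hprod : (K : ℤ) * (v * (K - (m + 1))) < K * (m + 1) ^ 2 :=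
      calc (K : ℤ) * (v * (K - (m + 1))) = K * v * (K - (m + 1)) := by ring
        _ ≤ ((m + 1) * (n + 1) + K - 1) * (K - (m + 1)) := by
          gcongr <;> omega
        _ = K * (m + 1) ^ 2 - (d * (d - 1) * m + (m + 1)) := by
          rw [show (n : ℤ) = 4 * m + 1 - K by omega]
          ring
        _ < K * (m + 1) ^ 2 := by nlinarith
    nlinarith [lt_of_mul_lt_mul_left hprod (show (0 : ℤ) ≤ K by omega)]
  obtain ⟨t, ht, hsum⟩ := Nat.exists_fin_sum_eq_of_mul_le_of_le_mul hAv hvK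
  exact ⟨v, t, hv, hvn, fun i => ⟨by grind, (ht i).2⟩, by rw [hsum, mul_comm]⟩

theorem stmt_13_general (m : ℕ) (s : ℕ) (hs1 : m ≤ s) (hs2 : s ≤ 4 * m + 1) :
    W (m + 2) (Real.sqrt (4 * m + 1)) ((s : ℝ) / Real.sqrt (4 * m + 1)) := by
  set α := √(4 * m + 1 : ℝ)
  have hα : 0 < α := by positivity
  have hαsq : α ^ 2 = 4 * m + 1 := Real.sq_sqrt (by positivity)
  induction hd : 4 * m + 1 - s using Nat.strong_induction_on generalizing s with
  | _ d ih =>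
  obtain ⟨K, hK⟩ : ∃ K, s + K = 4 * m + 1 := ⟨_, Nat.add_sub_of_le hs2⟩
  have hsub : (s : ℝ) / α = α - K / α := by
    rw [eq_sub_iff_add_eq, ← add_div, div_eq_iff hα.ne', ← sq, hαsq]
    exact_mod_cast hK
  rw [hsub]
  rcases Nat.eq_zero_or_pos K with rfl | hK0
  · simpa using W.base
  rcases le_or_gt K (m + 1) with hKm | hKm
  · rw [div_eq_mul_inv]
    exact W.sub_nsmul_inv hK0 (by omega) .base hα (by rw [← div_eq_mul_inv, ← hsub]; positivity)
  obtain ⟨v, t, hv, hvn, ht, hsum⟩ := exists_fin_sum_eq_mul_of_lt_three_mul hs1 (by omega) hK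
  refine W.sub_div_of_sum_eq hα (by omega) (by omega) hv t (fun i => by grind) hsum
    (fun i => ?_) ?_
  · obtain ⟨hst, htv⟩ := ht i
    exact W.mul_div_of_div hα (by omega) (by omega) (ih _ (by omega) (t i) (by omega) (by omega) rfl)
  · rw [hαsq]
    exact_mod_cast (by omega : K ≤ 4 * m + 1)

theorem stmt_13 (m : ℕ) (hm : 0 < m) (s : ℕ) (hs1 : m ≤ s) (hs2 : s ≤ 4 * m + 1) :
    W (m + 2) (Real.sqrt (4 * m + 1)) ((s : ℝ) / Real.sqrt (4 * m + 1)) :=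
  stmt_13_general m s hs1 hs2
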